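/- Let R be a prime ring which is E(R)-semiprime and not a domain. Then R contains a nontrivial idempotent and R is [E(R), R]-prime. -/

import Mathlib

/-- The additive subgroup generated by commutators `a * b - b * a` with `a ∈ A`, `b ∈ B`. -/
def lieBr {R : Type*} [Ring R] (A B : Set R) : AddSubgroup R :=
  AddSubgroup.closure {z : R | ∃ a ∈ A, ∃ b ∈ B, z = a * b - b * a}

/-!
If `a * b = 0` with `a, b ≠ 0`, primeness gives `q x p ≠ 0` for some `x`, and `c = q x p`
squares to zero. Were `0` and `1` the only idempotents, `E(R) = ℤ · 1` and `c E(R) c = 0`,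
contradicting `E(R)`-semiprimeness; so there is an idempotent `e ≠ 0, 1`. Put `f = 1 - e`.
The commutators `[e, e x] = e x f` and `[e, x e] = -f x e` turn `a [E(R), R] b = 0` into
`a e R f b = 0` and `a f R e b = 0`, so by primeness `a = 0`, `b = 0`, or one of
`a e = e b = 0`, `a f = f b = 0`. In the first of these, `e x f = (e + e x f) - e ∈ E(R)`,
and `a [e x f, y] b = 0` reduces to `a R e R b = 0`, whence `b = 0`; the second is symmetric.
-/

section

variable {R : Type*} [Ring R]

/-- The paper's `S`-primeness; `IsSPrime (Set.univ : Set R)` is primeness of `R`. -/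
def IsSPrime (S : Set R) : Prop :=
  ∀ a b : R, (∀ x ∈ S, a * x * b = 0) → a = 0 ∨ b = 0

variable (R) in
def idempotentSpan : AddSubgroup R :=
  AddSubgroup.closure {e : R | IsIdempotentElem e}

theorem mul_sub_mul_mem_lieBr {A B : Set R} {a b : R} (ha : a ∈ A) (hb : b ∈ B) :
    a * b - b * a ∈ lieBr A B :=
  AddSubgroup.subset_closure ⟨a, ha, b, hb, rfl⟩

theorem IsSPrime.exists_mul_self_eq_zero (hR : IsSPrime (Set.univ : Set R)) {p q : R}
    (hp : p ≠ 0) (hq : q ≠ 0) (hpq : p * q = 0) : ∃ c : R, c ≠ 0 ∧ c * c = 0 := by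
  obtain ⟨x, hx⟩ : ∃ x, q * x * p ≠ 0 := by
    by_contra! h
    exact (hR q p fun x _ => h x).elim hq hp
  refine ⟨q * x * p, hx, ?_⟩
  calc q * x * p * (q * x * p) = q * x * (p * q) * x * p := by noncomm_ring
    _ = 0 := by rw [hpq, mul_zero, zero_mul, zero_mul]

theorem exists_isIdempotentElem_ne_zero_ne_one
    (hE : ∀ a : R, (∀ x ∈ idempotentSpan R, a * x * a = 0) → a = 0)
    {c : R} (hc : c ≠ 0) (hcc : c * c = 0) : ∃ e : R, IsIdempotentElem e ∧ e ≠ 0 ∧ e ≠ 1 := by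
  by_contra! htriv
  have hspan : idempotentSpan R ≤ AddSubgroup.zmultiples 1 := by
    refine AddSubgroup.closure_le _ |>.mpr fun e he => ?_
    obtain rfl | he0 := eq_or_ne e 0
    · exact zero_mem _
    · rw [htriv e he he0]
      exact AddSubgroup.mem_zmultiples 1
  refine hc (hE c fun u hu => ?_)
  obtain ⟨n, rfl⟩ := AddSubgroup.mem_zmultiples_iff.mp (hspan hu)
  rw [mul_smul_comm, mul_one, smul_mul_assoc, hcc, smul_zero]

theorem IsIdempotentElem.add_mul_mul_one_sub {e : R} (he : IsIdempotentElem e) (x : R) :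
    IsIdempotentElem (e + e * x * (1 - e)) := by
  have hee : e * e = e := he
  have hf : (1 - e) * e = 0 := by rw [sub_mul, one_mul, hee, sub_self]
  calc (e + e * x * (1 - e)) * (e + e * x * (1 - e))
      = e * e + e * e * x * (1 - e) + e * x * ((1 - e) * e)
        + e * x * ((1 - e) * e) * x * (1 - e) := by noncomm_ring
    _ = e + e * x * (1 - e) := by rw [hf, hee]; noncomm_ring

theorem IsIdempotentElem.mem_idempotentSpan {e : R} (he : IsIdempotentElem e) :
    e ∈ idempotentSpan R :=
  AddSubgroup.subset_closure he

theorem mul_mul_one_sub_mem_idempotentSpan {e : R} (he : IsIdempotentElem e) (x : R) :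
    e * x * (1 - e) ∈ idempotentSpan R := by
  have h := sub_mem (he.add_mul_mul_one_sub x).mem_idempotentSpan he.mem_idempotentSpan
  rwa [add_sub_cancel_left] at h

theorem IsSPrime.eq_zero_or_eq_zero_of_mul_mul_mul_mul (hR : IsSPrime (Set.univ : Set R))
    {a e b : R} (he : e ≠ 0) (h : ∀ x y : R, a * y * e * x * b = 0) : a = 0 ∨ b = 0 := by
  by_cases ha : a = 0
  · exact .inl ha
  have heb : ∀ x, e * x * b = 0 := fun x =>
    (hR a (e * x * b) fun y _ => by rw [← h x y]; noncomm_ring).resolve_left ha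
  exact .inr ((hR e b fun x _ => heb x).resolve_left he)

theorem IsSPrime.eq_zero_or_eq_zero_of_mul_eq_zero_of_eq_zero_mul
    (hR : IsSPrime (Set.univ : Set R)) {e : R} (he : IsIdempotentElem e) (he0 : e ≠ 0) {a b : R}
    (hab : ∀ u ∈ idempotentSpan R, ∀ y : R, a * (u * y - y * u) * b = 0)
    (hae : a * e = 0) (heb : e * b = 0) : a = 0 ∨ b = 0 := by
  refine hR.eq_zero_or_eq_zero_of_mul_mul_mul_mul he0 fun x y => ?_
  have hb : (1 - e) * b = b := by rw [sub_mul, one_mul, heb, sub_zero]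
  calc a * y * e * x * b = a * y * e * x * ((1 - e) * b) := by rw [hb]
    _ = a * e * (x * (1 - e) * y * b)
          - a * (e * x * (1 - e) * y - y * (e * x * (1 - e))) * b := by noncomm_ring
    _ = 0 := by
      rw [hae, hab _ (mul_mul_one_sub_mem_idempotentSpan he x) y, zero_mul, sub_zero]

theorem IsSPrime.isSPrime_lieBr (hR : IsSPrime (Set.univ : Set R)) {e : R}
    (he : IsIdempotentElem e) (he0 : e ≠ 0) (he1 : e ≠ 1) :
    IsSPrime (lieBr (idempotentSpan R : Set R) Set.univ : Set R) := by
  intro a b h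
  have hab : ∀ u ∈ idempotentSpan R, ∀ y : R, a * (u * y - y * u) * b = 0 :=
    fun u hu y => h _ (mul_sub_mul_mem_lieBr hu (Set.mem_univ y))
  have heE : e ∈ idempotentSpan R := he.mem_idempotentSpan
  have hee : e * e = e := he
  have hleft : a * e = 0 ∨ (1 - e) * b = 0 := hR _ _ fun x _ => by
    calc a * e * x * ((1 - e) * b) = a * (e * e * x - e * x * e) * b := by
          rw [hee]; noncomm_ring
      _ = 0 := by rw [mul_assoc e e x]; exact hab e heE (e * x)
  have hright : a * (1 - e) = 0 ∨ e * b = 0 := hR _ _ fun x _ => by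
    calc a * (1 - e) * x * (e * b) = -(a * (e * (x * e) - x * (e * e)) * b) := by
          rw [hee]; noncomm_ring
      _ = 0 := by rw [← mul_assoc x e e, hab e heE (x * e), neg_zero]
  have hsplit_right (z : R) : z = z * e + z * (1 - e) := by noncomm_ring
  have hsplit_left (z : R) : z = e * z + (1 - e) * z := by noncomm_ring
  rcases hleft with hae | hfb <;> rcases hright with haf | heb
  · exact .inl (by rw [hsplit_right a, hae, haf, add_zero])
  · exact hR.eq_zero_or_eq_zero_of_mul_eq_zero_of_eq_zero_mul he he0 hab hae heb
  · exact hR.eq_zero_or_eq_zero_of_mul_eq_zero_of_eq_zero_mul he.one_sub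
      (sub_ne_zero.mpr he1.symm) hab haf hfb
  · exact .inr (by rw [hsplit_left b, heb, hfb, add_zero])

end

theorem stmt13 {R : Type*} [Ring R]
    (hprime : ∀ a b : R, (∀ x : R, a * x * b = 0) → a = 0 ∨ b = 0)
    (hE : ∀ a : R,
      (∀ x ∈ AddSubgroup.closure {e : R | IsIdempotentElem e}, a * x * a = 0) → a = 0)
    (hnd : ∃ a b : R, a ≠ 0 ∧ b ≠ 0 ∧ a * b = 0) :
    (∃ e : R, IsIdempotentElem e ∧ e ≠ 0 ∧ e ≠ 1) ∧
    (∀ a b : R,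
      (∀ x ∈ lieBr ((AddSubgroup.closure {e : R | IsIdempotentElem e} : AddSubgroup R) : Set R)
        Set.univ, a * x * b = 0) → a = 0 ∨ b = 0) := by
  have hR : IsSPrime (Set.univ : Set R) := fun a b h => hprime a b fun x => h x trivial
  obtain ⟨p, q, hp, hq, hpq⟩ := hnd
  obtain ⟨c, hc, hcc⟩ := hR.exists_mul_self_eq_zero hp hq hpq
  obtain ⟨e, he, he0, he1⟩ := exists_isIdempotentElem_ne_zero_ne_one hE hc hcc
  exact ⟨⟨e, he, he0, he1⟩, hR.isSPrime_lieBr he he0 he1⟩
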